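/- For $u\in H^s$ on the 3-torus, the deconvolved field satisfies $H_N(u)\in H^{s+2\theta}$ with $\|H_N(u)\|_{H^{s+2\theta}} \le \frac{N+1}{\alpha^{2\theta}}\|u\|_{H^s}$, using the symbol identity $1-q^{N+1}=(1-q)\sum_{n=0}^N q^n$ with $q=\frac{\alpha^{2\theta}|k|^{2\theta}}{1+\alpha^{2\theta}|k|^{2\theta}}$. -/

import Mathlib

open MeasureTheory Filter Topology

noncomputable section

/-- Frequencies of the Fourier series on the 3-torus. -/
abbrev Freq : Type := Fin 3 → ℤ

/-- Euclidean length `|k|` of a frequency. -/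
def knorm (k : Freq) : ℝ := Real.sqrt (∑ i, ((k i : ℝ)) ^ 2)

/-- `u ∈ H^s` (zero-mean): summability of the Sobolev weights of the
Fourier coefficients. -/
def memHs (s : ℝ) (u : Freq → ℂ) : Prop :=
  Summable (fun k : {k : Freq // k ≠ 0} => knorm k.1 ^ (2 * s) * ‖u k.1‖ ^ 2)

/-- The `H^s` norm `(∑_{k ≠ 0} |k|^{2s} |û_k|²)^{1/2}`. -/
def HsNorm (s : ℝ) (u : Freq → ℂ) : ℝ :=
  Real.sqrt (∑' k : {k : Freq // k ≠ 0}, knorm k.1 ^ (2 * s) * ‖u k.1‖ ^ 2)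

/-- The Helmholtz-type filter with symbol `1/(1+α^{2θ}|k|^{2θ})`. -/
def filt (α θ : ℝ) (u : Freq → ℂ) (k : Freq) : ℂ :=
  u k / ((1 + α ^ (2 * θ) * knorm k ^ (2 * θ) : ℝ) : ℂ)

/-- The symbol `q_k = α^{2θ}|k|^{2θ}/(1+α^{2θ}|k|^{2θ})` of `I - G⁻¹`. -/
def qsym (α θ : ℝ) (k : Freq) : ℝ :=
  α ^ (2 * θ) * knorm k ^ (2 * θ) / (1 + α ^ (2 * θ) * knorm k ^ (2 * θ))

/-- The van Cittert-type deconvolution operator `H_N` with Fourier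
multiplier `1 - q_k^{N+1}`. -/
def decon (α θ : ℝ) (N : ℕ) (u : Freq → ℂ) (k : Freq) : ℂ :=
  ((1 - qsym α θ k ^ (N + 1) : ℝ) : ℂ) * u k


lemma knorm_nonneg (k : Freq) : 0 ≤ knorm k := Real.sqrt_nonneg _

lemma knorm_pos {k : Freq} (hk : k ≠ 0) : 0 < knorm k := by
  obtain ⟨i, hi⟩ := Function.ne_iff.mp hk
  have h0 : (0:ℝ) < ((k i : ℝ))^2 := by
    have : ((k i : ℝ)) ≠ 0 := Int.cast_ne_zero.mpr hi
    positivity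
  exact Real.sqrt_pos.mpr (Finset.sum_pos' (fun j _ => sq_nonneg _) ⟨i, Finset.mem_univ i, h0⟩)

lemma decon_key (α θ s : ℝ) (hα : 0 < α) (N : ℕ) (u : Freq → ℂ)
    {k : Freq} (hk : k ≠ 0) :
    knorm k ^ (2 * (s + 2 * θ)) * ‖decon α θ N u k‖ ^ 2
      ≤ (((N : ℝ) + 1) / α ^ (2 * θ)) ^ 2 * (knorm k ^ (2 * s) * ‖u k‖ ^ 2) := by
  have hK : 0 < knorm k := knorm_pos hk
  set K := knorm k with hKdef
  set A : ℝ := α ^ (2 * θ) * K ^ (2 * θ) with hAdef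
  have hαp : (0:ℝ) < α ^ (2 * θ) := Real.rpow_pos_of_pos hα _
  have hKp : (0:ℝ) < K ^ (2 * θ) := Real.rpow_pos_of_pos hK _
  have hA : 0 < A := mul_pos hαp hKp
  have h1A : (0:ℝ) < 1 + A := by linarith
  set q : ℝ := qsym α θ k with hqdef
  have hqA : q = A / (1 + A) := rfl
  have hq0 : 0 ≤ q := by rw [hqA]; positivity
  have hq1 : q < 1 := by rw [hqA]; exact div_lt_one h1A |>.mpr (by linarith)
  set r : ℝ := 1 - q ^ (N + 1) with hrdef
  have hr0 : 0 ≤ r := by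
    have : q ^ (N + 1) ≤ 1 := pow_le_one₀ hq0 hq1.le
    simp [hrdef]; linarith
  have h1 : r ≤ ((N:ℝ) + 1) * (1 - q) := by
    have := one_add_mul_le_pow (a := q - 1) (by linarith) (N + 1)
    have hN : ((N+1 : ℕ) : ℝ) = (N:ℝ) + 1 := by push_cast; ring
    rw [show (1:ℝ)+(q-1) = q by ring, hN] at this
    rw [hrdef]
    linarith
  have hAq : A * (1 - q) = q := by
    rw [hqA]; field_simp; ring
  have h2 : K ^ (2 * θ) * r ≤ ((N:ℝ) + 1) / α ^ (2 * θ) := by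
    rw [le_div_iff₀ hαp]
    have hAr : A * r ≤ ((N:ℝ) + 1) * q := by
      nlinarith [mul_le_mul_of_nonneg_left h1 hA.le]
    calc K ^ (2 * θ) * r * α ^ (2 * θ) = A * r := by rw [hAdef]; ring
      _ ≤ ((N:ℝ) + 1) * q := hAr
      _ ≤ ((N:ℝ) + 1) * 1 := by nlinarith
      _ = (N:ℝ) + 1 := by ring
  have hnorm : ‖decon α θ N u k‖ = r * ‖u k‖ := by
    rw [decon, norm_mul, Complex.norm_real, Real.norm_eq_abs, abs_of_nonneg hr0]
  have hKsplit : K ^ (2 * (s + 2 * θ)) = K ^ (2 * s) * (K ^ (2 * θ)) ^ 2 := by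
    rw [← Real.rpow_natCast (K ^ (2 * θ)) 2, ← Real.rpow_mul hK.le, ← Real.rpow_add hK]
    push_cast; ring_nf
  have hsq : (K ^ (2 * θ)) ^ 2 * r ^ 2 ≤ (((N:ℝ) + 1) / α ^ (2 * θ)) ^ 2 := by
    have := pow_le_pow_left₀ (by positivity) h2 2
    nlinarith [this]
  rw [hnorm, hKsplit, mul_pow]
  have hrest : 0 ≤ K ^ (2 * s) * ‖u k‖ ^ 2 := by positivity
  calc K ^ (2*s) * (K ^ (2*θ))^2 * (r^2 * ‖u k‖^2)
      = ((K ^ (2*θ))^2 * r^2) * (K ^ (2*s) * ‖u k‖^2) := by ring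
    _ ≤ (((N:ℝ) + 1) / α ^ (2 * θ)) ^ 2 * (K ^ (2*s) * ‖u k‖^2) :=
        mul_le_mul_of_nonneg_right hsq hrest

/-- for `u ∈ H^s`, the deconvolved field satisfies
`H_N(u) ∈ H^{s+2θ}` with `‖H_N(u)‖_{H^{s+2θ}} ≤ (N+1)/α^{2θ} ‖u‖_{H^s}`. -/
theorem decon_regularization (α θ s : ℝ) (hα : 0 < α) (hθ : 0 < θ) (N : ℕ)
    (u : Freq → ℂ) (hu : memHs s u) :
    memHs (s + 2 * θ) (decon α θ N u) ∧
    HsNorm (s + 2 * θ) (decon α θ N u) ≤ ((N : ℝ) + 1) / α ^ (2 * θ) * HsNorm s u := by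
  set C : ℝ := (((N:ℝ) + 1) / α ^ (2 * θ)) ^ 2 with hCdef
  have hpt : ∀ k : {k : Freq // k ≠ 0},
      knorm k.1 ^ (2 * (s + 2 * θ)) * ‖decon α θ N u k.1‖ ^ 2
        ≤ C * (knorm k.1 ^ (2 * s) * ‖u k.1‖ ^ 2) :=
    fun k => decon_key α θ s hα N u k.2
  have hnn : ∀ k : {k : Freq // k ≠ 0},
      0 ≤ knorm k.1 ^ (2 * (s + 2 * θ)) * ‖decon α θ N u k.1‖ ^ 2 :=
    fun k => mul_nonneg (Real.rpow_nonneg (knorm_nonneg _) _) (sq_nonneg _)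
  have hsum : Summable (fun k : {k : Freq // k ≠ 0} =>
      C * (knorm k.1 ^ (2 * s) * ‖u k.1‖ ^ 2)) := hu.mul_left C
  have hmem : memHs (s + 2 * θ) (decon α θ N u) :=
    Summable.of_nonneg_of_le hnn hpt hsum
  refine ⟨hmem, ?_⟩
  have hcoef : 0 ≤ ((N:ℝ) + 1) / α ^ (2 * θ) := by
    have := Real.rpow_pos_of_pos hα (2 * θ)
    positivity
  have hT : (∑' k : {k : Freq // k ≠ 0},
      knorm k.1 ^ (2 * (s + 2 * θ)) * ‖decon α θ N u k.1‖ ^ 2)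
        ≤ C * ∑' k : {k : Freq // k ≠ 0}, knorm k.1 ^ (2 * s) * ‖u k.1‖ ^ 2 := by
    calc (∑' k : {k : Freq // k ≠ 0},
        knorm k.1 ^ (2 * (s + 2 * θ)) * ‖decon α θ N u k.1‖ ^ 2)
        ≤ ∑' k : {k : Freq // k ≠ 0}, C * (knorm k.1 ^ (2 * s) * ‖u k.1‖ ^ 2) :=
          Summable.tsum_le_tsum hpt hmem hsum
      _ = C * ∑' k : {k : Freq // k ≠ 0}, knorm k.1 ^ (2 * s) * ‖u k.1‖ ^ 2 :=
          tsum_mul_left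
  rw [HsNorm, HsNorm]
  calc Real.sqrt (∑' k : {k : Freq // k ≠ 0},
        knorm k.1 ^ (2 * (s + 2 * θ)) * ‖decon α θ N u k.1‖ ^ 2)
      ≤ Real.sqrt (C * ∑' k : {k : Freq // k ≠ 0},
          knorm k.1 ^ (2 * s) * ‖u k.1‖ ^ 2) := Real.sqrt_le_sqrt hT
    _ = ((N:ℝ) + 1) / α ^ (2 * θ) *
          Real.sqrt (∑' k : {k : Freq // k ≠ 0}, knorm k.1 ^ (2 * s) * ‖u k.1‖ ^ 2) := by
        rw [hCdef, Real.sqrt_mul (sq_nonneg _), Real.sqrt_sq hcoef]
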